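/- Let M be a matroid, F and H flats forming a non-modular pair with H a hyperplane, such that some extension N₁ of M makes (cl_{N₁}(F), cl_{N₁}(H)) a modular pair, and some extension N₂ of M has the property that in every extension N of N₂ the pair (cl_N(F), cl_N(H)) is non-modular. Then M is not sticky: there exist two extensions of M admitting no amalgam. -/

import Mathlib

/-! An amalgam `A` of `N₁` and `N₂` extends both. Modularity of the pair of closures of `F` and
`H` persists from `N₁` to `A`: passing to an extension leaves the ranks of the two closures and
of their union unchanged and can only enlarge their intersection, while submodularity bounds the
rank of the intersection from above. But `A` also extends `N₂`, where no extension makes the pair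
modular. -/

open Set

namespace StickyKantor

variable {α : Type*}

/-- The rank of a set in a matroid, as an integer (junk value `0` when infinite). -/
noncomputable def rk (M : Matroid α) (X : Set α) : ℤ :=
  ((⨆ I ∈ {I : Set α | M.Indep I ∧ I ⊆ X}, I.encard).toNat : ℤ)

/-- The modular defect of a pair of sets. -/
noncomputable def mdefect (M : Matroid α) (X Y : Set α) : ℤ :=
  rk M X + rk M Y - rk M (X ∪ Y) - rk M (X ∩ Y)

/-- A modular pair of sets. -/
def ModularPair (M : Matroid α) (X Y : Set α) : Prop :=
  rk M X + rk M Y = rk M (X ∪ Y) + rk M (X ∩ Y)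

/-- `M'` is an extension of `M`: it has a larger ground set and restricts to `M`. -/
def IsExtension (M' M : Matroid α) : Prop :=
  M.E ⊆ M'.E ∧ M = M'.restrict M.E

/-- A point: a rank-1 flat. -/
def IsPoint (M : Matroid α) (p : Set α) : Prop := M.IsFlat p ∧ rk M p = 1

/-- A line: a rank-2 flat. -/
def IsLine (M : Matroid α) (l : Set α) : Prop := M.IsFlat l ∧ rk M l = 2

/-- A plane: a rank-3 flat. -/
def IsPlane (M : Matroid α) (e : Set α) : Prop := M.IsFlat e ∧ rk M e = 3

/-- Two lines are coplanar if their join has rank at most 3. -/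
def Coplanar (M : Matroid α) (l₁ l₂ : Set α) : Prop := rk M (l₁ ∪ l₂) ≤ 3

/-- A hyperplane: a maximal proper flat. -/
def IsHyperplane (M : Matroid α) (H : Set α) : Prop :=
  M.IsFlat H ∧ H ≠ M.E ∧ ∀ F, M.IsFlat F → H ⊂ F → F = M.E

/-- A matroid is hypermodular if every pair of hyperplanes is a modular pair. -/
def Hypermodular (M : Matroid α) : Prop :=
  ∀ H₁ H₂, IsHyperplane M H₁ → IsHyperplane M H₂ → ModularPair M H₁ H₂

/-- A matroid is modular if every pair of flats is a modular pair. -/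
def Modular (M : Matroid α) : Prop :=
  ∀ F₁ F₂, M.IsFlat F₁ → M.IsFlat F₂ → ModularPair M F₁ F₂

/-- A modular cut: an up-closed family of flats closed under intersections of
modular pairs. -/
def IsModularCut (M : Matroid α) (𝓜 : Set (Set α)) : Prop :=
  (∀ F ∈ 𝓜, M.IsFlat F) ∧
  (∀ F ∈ 𝓜, ∀ F', M.IsFlat F' → F ⊆ F' → F' ∈ 𝓜) ∧
  (∀ F₁ ∈ 𝓜, ∀ F₂ ∈ 𝓜, ModularPair M F₁ F₂ → F₁ ∩ F₂ ∈ 𝓜)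

/-- The principal modular cut of a flat `F`. -/
def principalCut (M : Matroid α) (F : Set α) : Set (Set α) :=
  {G | M.IsFlat G ∧ F ⊆ G}

/-- The modular cut generated by a family of flats. -/
def genCut (M : Matroid α) (A : Set (Set α)) : Set (Set α) :=
  ⋂₀ {𝓜 | IsModularCut M 𝓜 ∧ A ⊆ 𝓜}

/-- A non-modular pair of flats is intersectable if the modular cut it generates is
not the principal modular cut of its intersection. -/
def Intersectable (M : Matroid α) (X Y : Set α) : Prop :=
  genCut M {X, Y} ≠ principalCut M (X ∩ Y)

/-- A matroid is OTE (only trivially extendable) if every nonempty modular cut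
is principal. -/
def OTE (M : Matroid α) : Prop :=
  ∀ 𝓜, IsModularCut M 𝓜 → 𝓜 ≠ ∅ → ∃ F, M.IsFlat F ∧ 𝓜 = principalCut M F

/-- A matroid is sticky if every pair of extensions meeting exactly in its ground set
has an amalgam. -/
def Sticky (M : Matroid α) : Prop :=
  ∀ N₁ N₂ : Matroid α, IsExtension N₁ M → IsExtension N₂ M → N₁.E ∩ N₂.E = M.E →
    ∃ A : Matroid α, A.E = N₁.E ∪ N₂.E ∧ IsExtension A N₁ ∧ IsExtension A N₂

/-- The function `η` of the amalgam construction. -/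
noncomputable def eta (M M₁ M₂ : Matroid α) (X : Set α) : ℤ :=
  rk M₁ (X ∩ M₁.E) + rk M₂ (X ∩ M₂.E) - rk M (X ∩ M.E)

/-- The function `ξ` of the amalgam construction. -/
noncomputable def xi (M M₁ M₂ : Matroid α) (X : Set α) : ℤ :=
  sInf {n : ℤ | ∃ Y, X ⊆ Y ∧ Y ⊆ M₁.E ∪ M₂.E ∧ n = eta M M₁ M₂ Y}

/-- The lattice `𝓛(M₁,M₂)` of sets whose traces on both ground sets are flats. -/
def latticeL (M₁ M₂ : Matroid α) : Set (Set α) :=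
  {X | X ⊆ M₁.E ∪ M₂.E ∧ M₁.IsFlat (X ∩ M₁.E) ∧ M₂.IsFlat (X ∩ M₂.E)}

variable {M N : Matroid α} {X Y : Set α}

lemma rk_eq_toNat_eRk (M : Matroid α) (X : Set α) : rk M X = ((M.eRk X).toNat : ℤ) := by
  refine congrArg (fun n : ℕ∞ => (n.toNat : ℤ)) (le_antisymm ?_ ?_)
  · exact iSup₂_le fun I ⟨hI, hIX⟩ => hI.encard_le_eRk_of_subset hIX
  · exact Matroid.eRk_le_iff.2 fun I hIX hI => le_iSup₂_of_le I ⟨hI, hIX⟩ le_rfl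

lemma modularPair_iff_eRk (hX : M.IsRkFinite X) (hY : M.IsRkFinite Y) :
    ModularPair M X Y ↔ M.eRk X + M.eRk Y = M.eRk (X ∪ Y) + M.eRk (X ∩ Y) := by
  rw [ModularPair, rk_eq_toNat_eRk, rk_eq_toNat_eRk, rk_eq_toNat_eRk, rk_eq_toNat_eRk,
    ← ENat.natCast_toNat hX.eRk_lt_top.ne, ← ENat.natCast_toNat hY.eRk_lt_top.ne,
    ← ENat.natCast_toNat (hX.union hY).eRk_lt_top.ne,
    ← ENat.natCast_toNat hX.inter_right.eRk_lt_top.ne]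
  simp only [ENat.toNat_natCast]
  norm_cast

namespace IsExtension

lemma eRk_eq (h : IsExtension N M) (hX : X ⊆ M.E) : N.eRk X = M.eRk X := by
  rw [h.2, Matroid.restrict_eRk_eq _ hX]

lemma isRkFinite_iff (h : IsExtension N M) (hX : X ⊆ M.E) :
    N.IsRkFinite X ↔ M.IsRkFinite X := by
  rw [← Matroid.eRk_ne_top_iff, ← Matroid.eRk_ne_top_iff, h.eRk_eq hX]

lemma closure_subset (h : IsExtension N M) (hX : X ⊆ M.E) : M.closure X ⊆ N.closure X := by
  rw [h.2, Matroid.restrict_closure_eq _ hX h.1]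
  exact inter_subset_left

lemma modularPair_closure (h : IsExtension N M) (hX : X ⊆ M.E) (hY : Y ⊆ M.E)
    (hXf : M.IsRkFinite X) (hYf : M.IsRkFinite Y)
    (hmod : ModularPair M (M.closure X) (M.closure Y)) :
    ModularPair N (N.closure X) (N.closure Y) := by
  have hXN : N.IsRkFinite X := (h.isRkFinite_iff hX).2 hXf
  have hYN : N.IsRkFinite Y := (h.isRkFinite_iff hY).2 hYf
  have hinter : M.eRk (M.closure X ∩ M.closure Y) ≤ N.eRk (N.closure X ∩ N.closure Y) := by
    rw [← h.eRk_eq (inter_subset_left.trans (M.closure_subset_ground X))]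
    exact N.eRk_mono (inter_subset_inter (h.closure_subset hX) (h.closure_subset hY))
  have hsubmod := N.eRk_submod (N.closure X) (N.closure Y)
  rw [modularPair_iff_eRk hXf.closure hYf.closure] at hmod
  rw [modularPair_iff_eRk hXN.closure hYN.closure]
  simp only [Matroid.eRk_closure_eq, Matroid.eRk_union_closure_left_eq,
    Matroid.eRk_union_closure_right_eq, h.eRk_eq hX, h.eRk_eq hY,
    h.eRk_eq (union_subset hX hY)] at hmod hsubmod ⊢
  rw [add_comm] at hsubmod
  exact le_antisymm (hmod.trans_le (add_le_add_right hinter _)) hsubmod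

end IsExtension

theorem not_sticky_general (M : Matroid α) [M.RankFinite]
    (F H : Set α) (hF : M.IsFlat F) (hH : IsHyperplane M H)
    (N₁ N₂ : Matroid α) (hN₁ : IsExtension N₁ M) (hN₂ : IsExtension N₂ M)
    (hmeet : N₁.E ∩ N₂.E = M.E)
    (hmod : ModularPair N₁ (N₁.closure F) (N₁.closure H))
    (hnonmod : ∀ N : Matroid α, IsExtension N N₂ →
      ¬ ModularPair N (N.closure F) (N.closure H)) :
    ¬ Sticky M := by
  intro hsticky
  obtain ⟨A, -, hA₁, hA₂⟩ := hsticky N₁ N₂ hN₁ hN₂ hmeet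
  have hFE : F ⊆ M.E := hF.subset_ground
  have hHE : H ⊆ M.E := hH.1.subset_ground
  refine hnonmod A hA₂ (hA₁.modularPair_closure (hFE.trans hN₁.1) (hHE.trans hN₁.1) ?_ ?_ hmod)
  · exact (hN₁.isRkFinite_iff hFE).2 (M.isRkFinite_set F)
  · exact (hN₁.isRkFinite_iff hHE).2 (M.isRkFinite_set H)

/-- a matroid with a non-modular flat–hyperplane pair that one
extension makes modular and another extension keeps non-modular forever is not
sticky. -/
theorem not_sticky (M : Matroid α) [M.RankFinite]
    (F H : Set α) (hF : M.IsFlat F) (hH : IsHyperplane M H)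
    (hnm : 0 < mdefect M F H)
    (N₁ N₂ : Matroid α) (hN₁ : IsExtension N₁ M) (hN₂ : IsExtension N₂ M)
    (hmeet : N₁.E ∩ N₂.E = M.E)
    (hmod : ModularPair N₁ (N₁.closure F) (N₁.closure H))
    (hnonmod : ∀ N : Matroid α, IsExtension N N₂ →
      ¬ ModularPair N (N.closure F) (N.closure H)) :
    ¬ Sticky M :=
  not_sticky_general M F H hF hH N₁ N₂ hN₁ hN₂ hmeet hmod hnonmod

end StickyKantor
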